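/- In the standard monster chart with inverted positions IP ⊆ {1,...,k}, with vector fields v_i = ∂/∂n_i and f_j defined recursively (f_j = f_{j-1} + n_j v_{j-1} if j ∉ IP, f_j = n_j f_{j-1} + v_{j-1} if j ∈ IP, f_0 = ∂/∂r_0), the Lie bracket satisfies: [v_i, f_j] = 0 for i > j, and for 1 ≤ i ≤ j ≤ k, [v_i, f_j] = a_{ij} f_{i-1} if i ∈ IP and [v_i, f_j] = a_{ij} v_{i-1} if i ∉ IP, where a_{ij} = Π_{h ∈ IP, i+1 ≤ h ≤ j} n_h. -/

import Mathlib

/-- Polynomial functions on the standard chart `U × 𝔸^k`, with variable `0`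
the coordinate `r₀` and variable `i+1` the coordinate `nᵢ`. -/
abbrev MPoly : Type := MvPolynomial ℕ ℚ

/-- A polynomial vector field, recorded by its (finitely many nonzero)
components with respect to the basis `∂/∂r₀, ∂/∂n₀, ∂/∂n₁, …`. -/
abbrev VField : Type := ℕ →₀ MPoly

/-- The coordinate function `nᵢ`. -/
noncomputable def nvar (i : ℕ) : MPoly := MvPolynomial.X (i + 1)

/-- The Lie derivative `X(q)` of a function by a vector field. -/
noncomputable def vfApply (X : VField) (q : MPoly) : MPoly :=
  X.sum fun d p => p * MvPolynomial.pderiv d q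

/-- The Lie bracket `[X,Y]` of two polynomial vector fields. -/
noncomputable def bracket (X Y : VField) : VField :=
  (X.sum fun d p => Y.sum fun c q => Finsupp.single c (p * MvPolynomial.pderiv d q)) -
  (Y.sum fun d p => X.sum fun c q => Finsupp.single c (p * MvPolynomial.pderiv d q))

/-- The standard vertical vector field `vᵢ = ∂/∂nᵢ`. -/
noncomputable def vvf (i : ℕ) : VField := Finsupp.single (i + 1) 1

/-- The standard focal vector fields: `f₀ = ∂/∂r₀`, and
`fᵢ = nᵢ·fᵢ₋₁ + vᵢ₋₁` if `i ∈ IP` (inverted choice),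
`fᵢ = fᵢ₋₁ + nᵢ·vᵢ₋₁` if `i ∉ IP` (ordinary choice). -/
noncomputable def fvf (IP : Finset ℕ) : ℕ → VField
  | 0 => Finsupp.single 0 1
  | (i + 1) =>
      if i + 1 ∈ IP then nvar (i + 1) • fvf IP i + vvf i
      else fvf IP i + nvar (i + 1) • vvf i

/-- `a_{ij} = Π_{h ∈ IP, i+1 ≤ h ≤ j} n_h`. -/
noncomputable def apoly (IP : Finset ℕ) (i j : ℕ) : MPoly :=
  ∏ h ∈ (Finset.Icc (i + 1) j).filter (fun h => h ∈ IP), nvar h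

/-- `b_{ij} = a_{i+1,j}` if `i+1 ∈ IP`, and `b_{ij} = n_{i+1}·a_{i+1,j}` otherwise. -/
noncomputable def bpoly (IP : Finset ℕ) (i j : ℕ) : MPoly :=
  if i + 1 ∈ IP then apoly IP (i + 1) j else nvar (i + 1) * apoly IP (i + 1) j

/-!
Since `vᵢ` has constant coefficients, `[vᵢ, Y]` is `Y` with `∂/∂nᵢ` applied to every component.
By the product rule, the recursion step from `f_j` to `f_{j+1}` therefore multiplies `[vᵢ, f_j]`
by `n_{j+1}` (if `j+1 ∈ IP`) or by `1`, except at `j + 1 = i`, where `∂nᵢ/∂nᵢ = 1` contributes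
`f_{i-1}` or `v_{i-1}`. Starting from `[vᵢ, f_j] = 0` for `j < i`, induction on `j` accumulates
the factor `a_{ij}`.
-/

open MvPolynomial

lemma bracket_vvf_apply (i : ℕ) (Y : VField) (c : ℕ) :
    bracket (vvf i) Y c = pderiv (i + 1) (Y c) := by
  have hconst (d : ℕ) (p : MPoly) :
      (vvf i).sum (fun c q => Finsupp.single c (p * pderiv d q)) = 0 := by
    rw [vvf, Finsupp.sum_single_index (by simp)]
    simp
  rw [bracket, Finsupp.sub_apply]
  simp only [hconst, Finsupp.sum_fun_zero, Finsupp.coe_zero, Pi.zero_apply, sub_zero]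
  rw [vvf, Finsupp.sum_single_index (by simp)]
  simp only [Finsupp.sum_apply, one_mul, Finsupp.single_apply]
  rw [Finsupp.sum_ite_eq' Y c (fun _ q => pderiv (i + 1) q)]
  split_ifs with hc
  · rfl
  · rw [Finsupp.notMem_support_iff.mp hc, map_zero]

lemma bracket_vvf_add (i : ℕ) (X Y : VField) :
    bracket (vvf i) (X + Y) = bracket (vvf i) X + bracket (vvf i) Y := by
  ext c
  simp [bracket_vvf_apply]

lemma bracket_vvf_smul (i : ℕ) (a : MPoly) (Y : VField) :
    bracket (vvf i) (a • Y) = pderiv (i + 1) a • Y + a • bracket (vvf i) Y := by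
  ext c
  simp only [Finsupp.add_apply, Finsupp.smul_apply, bracket_vvf_apply, smul_eq_mul, pderiv_mul]

lemma bracket_vvf_single_one (i c : ℕ) : bracket (vvf i) (Finsupp.single c 1) = 0 := by
  ext d
  rw [bracket_vvf_apply, Finsupp.single_apply]
  split_ifs <;> simp

lemma bracket_vvf_vvf (i j : ℕ) : bracket (vvf i) (vvf j) = 0 :=
  bracket_vvf_single_one i (j + 1)

lemma pderiv_nvar (i m : ℕ) : pderiv (i + 1) (nvar m) = if m = i then 1 else 0 := by
  split_ifs with h
  · simp [h, nvar]
  · exact pderiv_X_of_ne (by omega)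

lemma apoly_self (IP : Finset ℕ) (i : ℕ) : apoly IP i i = 1 := by
  rw [apoly, Finset.Icc_eq_empty (by omega), Finset.filter_empty, Finset.prod_empty]

lemma apoly_succ (IP : Finset ℕ) {i j : ℕ} (h : i ≤ j) :
    apoly IP i (j + 1) = (if j + 1 ∈ IP then nvar (j + 1) else 1) * apoly IP i j := by
  rw [apoly, apoly, Finset.prod_filter, Finset.prod_filter,
    Finset.prod_Icc_succ_top (by omega), mul_comm]

lemma bracket_vvf_fvf_succ_of_ne (IP : Finset ℕ) {i j : ℕ} (h : i ≠ j + 1) :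
    bracket (vvf i) (fvf IP (j + 1)) =
      (if j + 1 ∈ IP then nvar (j + 1) else 1) • bracket (vvf i) (fvf IP j) := by
  have hn : pderiv (i + 1) (nvar (j + 1)) = 0 := by rw [pderiv_nvar, if_neg (Ne.symm h)]
  rw [fvf]
  split_ifs <;> simp [bracket_vvf_add, bracket_vvf_smul, hn, bracket_vvf_vvf]

lemma bracket_vvf_fvf_of_lt (IP : Finset ℕ) {i j : ℕ} (h : j < i) :
    bracket (vvf i) (fvf IP j) = 0 := by
  induction j with
  | zero => exact bracket_vvf_single_one i 0
  | succ j ih => rw [bracket_vvf_fvf_succ_of_ne IP (by omega), ih (by omega), smul_zero]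

lemma bracket_vvf_succ_fvf_succ (IP : Finset ℕ) (i : ℕ) :
    bracket (vvf (i + 1)) (fvf IP (i + 1)) =
      if i + 1 ∈ IP then fvf IP i else vvf i := by
  have hn : pderiv (i + 1 + 1) (nvar (i + 1)) = 1 := by rw [pderiv_nvar, if_pos rfl]
  have hlt : bracket (vvf (i + 1)) (fvf IP i) = 0 := bracket_vvf_fvf_of_lt IP (by omega)
  rw [fvf]
  split_ifs <;> simp [bracket_vvf_add, bracket_vvf_smul, hn, hlt, bracket_vvf_vvf]

lemma bracket_vvf_fvf_of_le (IP : Finset ℕ) {i j : ℕ} (hi : 1 ≤ i) (hij : i ≤ j) :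
    bracket (vvf i) (fvf IP j) =
      if i ∈ IP then apoly IP i j • fvf IP (i - 1) else apoly IP i j • vvf (i - 1) := by
  induction j, hij using Nat.le_induction with
  | base =>
    obtain ⟨m, rfl⟩ : ∃ m, i = m + 1 := ⟨i - 1, by omega⟩
    simp only [bracket_vvf_succ_fvf_succ, apoly_self, one_smul, Nat.add_sub_cancel]
  | succ j hij ih =>
    rw [bracket_vvf_fvf_succ_of_ne IP (by omega), ih, apoly_succ IP hij]
    split_ifs <;> rw [mul_smul]

theorem bracket_vvf_fvf_general (k : ℕ) (IP : Finset ℕ) :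
    (∀ i j : ℕ, j < i → bracket (vvf i) (fvf IP j) = 0) ∧
    (∀ i j : ℕ, 1 ≤ i → i ≤ j → j ≤ k →
      bracket (vvf i) (fvf IP j) =
        if i ∈ IP then apoly IP i j • fvf IP (i - 1)
        else apoly IP i j • vvf (i - 1)) :=
  ⟨fun _ _ h => bracket_vvf_fvf_of_lt IP h, fun _ _ hi hij _ => bracket_vvf_fvf_of_le IP hi hij⟩

/-- `[vᵢ, f_j] = 0` for `i > j`, and for `1 ≤ i ≤ j ≤ k`:
`[vᵢ, f_j] = a_{ij}·fᵢ₋₁` if `i ∈ IP` and `[vᵢ, f_j] = a_{ij}·vᵢ₋₁` if `i ∉ IP`. -/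
theorem bracket_vvf_fvf (k : ℕ) (IP : Finset ℕ) (hIP : IP ⊆ Finset.Icc 1 k) :
    (∀ i j : ℕ, j < i → bracket (vvf i) (fvf IP j) = 0) ∧
    (∀ i j : ℕ, 1 ≤ i → i ≤ j → j ≤ k →
      bracket (vvf i) (fvf IP j) =
        if i ∈ IP then apoly IP i j • fvf IP (i - 1)
        else apoly IP i j • vvf (i - 1)) :=
  bracket_vvf_fvf_general k IP
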